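/- arXiv:1306.5663 — 2 statements merged into one kernel-verified Lean document; each statement's English description precedes it below -/
import Mathlib

section
/- Suppose complex-valued differentiable functions L, T, W, Y on an open interval I contained in (0,∞), with W nonvanishing on I, satisfy the system of ODEs: dL/dx = L/x + 2WLT/x + 2YL/(Wx) − Y/W, dT/dx = L/W − x/(2W) + νT/x, dW/dx = −2W²T/x + 2Y/x + νW/x, dY/dx = −νY/x + WL. Then the function x ↦ 2νL(x)/x − ν/2 + 2Y(x)L(x)/(W(x)x) − Y(x)/W(x) − 2W(x)L(x)T(x)/x has derivative identically zero on I, i.e. it is a constant of motion of the system. -/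
/-!
Write the quantity as `H(x, L, T, W, Y)`. Along a solution its derivative is
`∂ₓH + ∂_L H · L' + ∂_T H · T' + ∂_W H · W' + ∂_Y H · Y'`, and substituting the right-hand
sides of the system turns this into a rational function of `x, L, T, W, Y` that vanishes
identically once the denominators `x` and `W` are cleared.
-/

namespace BesselSystem

noncomputable def invariant (ν x : ℝ) (l t w y : ℂ) : ℂ :=
  2 * ν * l / x - ν / 2 + 2 * y * l / (w * x) - y / w - 2 * w * l * t / x

/-- The derivative of `invariant` along a curve with velocity `(1, l', t', w', y')`. -/
noncomputable def invariantDeriv (ν x : ℝ) (l t w y l' t' w' y' : ℂ) : ℂ :=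
  (2 * w * l * t - 2 * ν * l - 2 * y * l / w) / (x : ℂ) ^ 2
    + (2 * ν / x + 2 * y / (w * x) - 2 * w * t / x) * l'
    - 2 * w * l / x * t'
    + (y / w ^ 2 - 2 * y * l / (w ^ 2 * x) - 2 * l * t / x) * w'
    + (2 * l / (w * x) - 1 / w) * y'

theorem hasDerivAt_invariant (ν : ℝ) {L T W Y : ℝ → ℂ} {l' t' w' y' : ℂ} {x : ℝ}
    (hx : x ≠ 0) (hW : W x ≠ 0) (hL : HasDerivAt L l' x) (hT : HasDerivAt T t' x)
    (hWd : HasDerivAt W w' x) (hY : HasDerivAt Y y' x) :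
    HasDerivAt (fun s ↦ invariant ν s (L s) (T s) (W s) (Y s))
      (invariantDeriv ν x (L x) (T x) (W x) (Y x) l' t' w' y') x := by
  have hx' : (x : ℂ) ≠ 0 := Complex.ofReal_ne_zero.mpr hx
  have hid : HasDerivAt (fun s : ℝ ↦ (s : ℂ)) 1 x := (hasDerivAt_id x).ofReal_comp
  have h := (((((hL.const_mul (2 * (ν : ℂ))).div hid hx').sub_const ((ν : ℂ) / 2)).add
    (((hY.const_mul 2).mul hL).div (hWd.mul hid) (mul_ne_zero hW hx'))).sub
    (hY.div hWd hW)).sub ((((hWd.const_mul 2).mul hL).mul hT).div hid hx')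
  refine h.congr_deriv ?_
  simp only [invariantDeriv, Pi.mul_apply]
  field_simp
  ring

theorem invariantDeriv_eq_zero (ν : ℝ) {x : ℝ} {l t w y l' t' w' y' : ℂ}
    (hx : x ≠ 0) (hw : w ≠ 0)
    (hl' : l' = l / (x : ℂ) + 2 * w * l * t / (x : ℂ) + 2 * y * l / (w * (x : ℂ)) - y / w)
    (ht' : t' = l / w - (x : ℂ) / (2 * w) + (ν : ℂ) * t / (x : ℂ))
    (hw' : w' = -2 * w ^ 2 * t / (x : ℂ) + 2 * y / (x : ℂ) + (ν : ℂ) * w / (x : ℂ))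
    (hy' : y' = -(ν : ℂ) * y / (x : ℂ) + w * l) :
    invariantDeriv ν x l t w y l' t' w' y' = 0 := by
  have hx' : (x : ℂ) ≠ 0 := Complex.ofReal_ne_zero.mpr hx
  subst hl' ht' hw' hy'
  unfold invariantDeriv
  field_simp
  ring

end BesselSystem

theorem bessel_constant_of_motion_general
    (ν : ℝ)
    (I : Set ℝ) (hIpos : I ⊆ Set.Ioi (0 : ℝ))
    (L T W Y L' T' W' Y' : ℝ → ℂ)
    (hW : ∀ x ∈ I, W x ≠ 0)
    (hLd : ∀ x ∈ I, HasDerivAt L (L' x) x)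
    (hTd : ∀ x ∈ I, HasDerivAt T (T' x) x)
    (hWd : ∀ x ∈ I, HasDerivAt W (W' x) x)
    (hYd : ∀ x ∈ I, HasDerivAt Y (Y' x) x)
    (hLode : ∀ x ∈ I, L' x = L x / (x : ℂ) + 2 * W x * L x * T x / (x : ℂ)
      + 2 * Y x * L x / (W x * (x : ℂ)) - Y x / W x)
    (hTode : ∀ x ∈ I, T' x = L x / W x - (x : ℂ) / (2 * W x) + (ν : ℂ) * T x / (x : ℂ))
    (hWode : ∀ x ∈ I, W' x = -2 * (W x) ^ 2 * T x / (x : ℂ) + 2 * Y x / (x : ℂ)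
      + (ν : ℂ) * W x / (x : ℂ))
    (hYode : ∀ x ∈ I, Y' x = -(ν : ℂ) * Y x / (x : ℂ) + W x * L x) :
    ∀ x ∈ I, HasDerivAt (fun t : ℝ =>
      2 * (ν : ℂ) * L t / (t : ℂ) - (ν : ℂ) / 2 + 2 * Y t * L t / (W t * (t : ℂ))
        - Y t / W t - 2 * W t * L t * T t / (t : ℂ)) 0 x := by
  intro x hx
  have hx0 : x ≠ 0 := (hIpos hx).ne'
  have h := BesselSystem.hasDerivAt_invariant ν hx0 (hW x hx) (hLd x hx) (hTd x hx) (hWd x hx) (hYd x hx)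
  rwa [BesselSystem.invariantDeriv_eq_zero ν hx0 (hW x hx) (hLode x hx) (hTode x hx) (hWode x hx)
    (hYode x hx)] at h

/-- The quantity
`2νL/x − ν/2 + 2YL/(Wx) − Y/W − 2WLT/x` is a constant of motion of the ODE
system arising from the Lax pair of the single-interval Bessel process. -/
theorem bessel_constant_of_motion
    (ν : ℝ) (hν : -1 < ν)
    (I : Set ℝ) (hI : IsOpen I) (hIpos : I ⊆ Set.Ioi (0 : ℝ))
    (L T W Y L' T' W' Y' : ℝ → ℂ)
    (hW : ∀ x ∈ I, W x ≠ 0)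
    (hLd : ∀ x ∈ I, HasDerivAt L (L' x) x)
    (hTd : ∀ x ∈ I, HasDerivAt T (T' x) x)
    (hWd : ∀ x ∈ I, HasDerivAt W (W' x) x)
    (hYd : ∀ x ∈ I, HasDerivAt Y (Y' x) x)
    (hLode : ∀ x ∈ I, L' x = L x / (x : ℂ) + 2 * W x * L x * T x / (x : ℂ)
      + 2 * Y x * L x / (W x * (x : ℂ)) - Y x / W x)
    (hTode : ∀ x ∈ I, T' x = L x / W x - (x : ℂ) / (2 * W x) + (ν : ℂ) * T x / (x : ℂ))
    (hWode : ∀ x ∈ I, W' x = -2 * (W x) ^ 2 * T x / (x : ℂ) + 2 * Y x / (x : ℂ)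
      + (ν : ℂ) * W x / (x : ℂ))
    (hYode : ∀ x ∈ I, Y' x = -(ν : ℂ) * Y x / (x : ℂ) + W x * L x) :
    ∀ x ∈ I, HasDerivAt (fun t : ℝ =>
      2 * (ν : ℂ) * L t / (t : ℂ) - (ν : ℂ) / 2 + 2 * Y t * L t / (W t * (t : ℂ))
        - Y t / W t - 2 * W t * L t * T t / (t : ℂ)) 0 x :=
  bessel_constant_of_motion_general ν I hIpos L T W Y L' T' W' Y' hW hLd hTd hWd hYd hLode hTode
    hWode hYode
end

section
/- Let ν ∈ ℝ with ν > −1 and a₁ > 0. Let γ : ℝ → ℂ be a continuously differentiable curve such that: |γ'(u)| ≤ M for all u; γ(u) ∉ (−∞, 0] for all u; |γ(u)| ≥ r > 0 for all u; Re γ(u) ≤ −c|u| + C for all u, with constants c > 0 and C; and inf_{u,v ∈ ℝ} |γ(u) − 1/γ(v)| ≥ d > 0. Then the double integral ∬_{ℝ×ℝ} | γ(u)^{−ν} · exp( a₁γ(u)/2 − 1/(4γ(u)) ) / ( γ(u) − 1/γ(v) ) |² · |γ'(u)| · |γ'(v)|/|γ(v)|² du dv is finite, where z^{−ν} := exp(−ν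 Log z) with the principal logarithm. -/
/-!
Along `γ` the weight `t^{-ν} e^{a₁t/2 - 1/(4t)}` decays like `e^{-β|u|}`: the factor `e^{a₁ Re t/2}`
contributes `e^{-a₁c|u|/2}`, `|t| ≥ r` keeps `e^{-1/(4t)}` bounded, and `|t^{-ν}| = e^{-ν log|t|}`
grows subexponentially because `|t|` grows at most linearly. Together with `|t - s| ≥ d` this makes
the `u`-integral converge. In `v`, `|γ'(v)|/|γ(v)|²` is `O(1/(1+v²))` since `|γ(v)| ≥ r` and
`|γ(v)| ≥ -Re γ(v) ≥ c|v| - C`. The kernel is thus dominated by a product of integrable functions.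
-/

open MeasureTheory

noncomputable def besselAWeight (ν a : ℝ) (t : ℂ) : ℂ :=
  Complex.exp (-(ν : ℂ) * Complex.log t) * Complex.exp ((a : ℂ) * t / 2 - 1 / (4 * t))

lemma Real.abs_log_le_add_mul {r x ε : ℝ} (hr : 0 < r) (hrx : r ≤ x) (hε : 0 < ε) :
    |Real.log x| ≤ |Real.log r| + |Real.log ε| + ε * x := by
  have hx : 0 < x := hr.trans_le hrx
  have hlow : Real.log r ≤ Real.log x := Real.log_le_log hr hrx
  have hup : Real.log (ε * x) ≤ ε * x - 1 := Real.log_le_sub_one_of_pos (by positivity)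
  rw [Real.log_mul hε.ne' hx.ne'] at hup
  rw [abs_le]
  constructor <;>
    linarith [neg_abs_le (Real.log r), neg_abs_le (Real.log ε), abs_nonneg (Real.log r),
      abs_nonneg (Real.log ε), mul_pos hε hx]

lemma norm_besselAWeight_le (ν a : ℝ) {r : ℝ} (hr : 0 < r) {t : ℂ} (ht : r ≤ ‖t‖) :
    ‖besselAWeight ν a t‖ ≤ Real.exp (|ν| * |Real.log ‖t‖| + a / 2 * t.re + 1 / (4 * r)) := by
  have hlog : (-(ν : ℂ) * Complex.log t).re = -ν * Real.log ‖t‖ := by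
    rw [← Complex.ofReal_neg, Complex.re_ofReal_mul, Complex.log_re]
  have hexp : ((a : ℂ) * t / 2 - 1 / (4 * t)).re = a / 2 * t.re - (1 / (4 * t)).re := by
    rw [Complex.sub_re, mul_div_right_comm, ← Complex.ofReal_ofNat, ← Complex.ofReal_div,
      Complex.re_ofReal_mul]
  have hinv : -(1 / (4 * t)).re ≤ 1 / (4 * r) :=
    calc -(1 / (4 * t)).re ≤ ‖1 / (4 * t)‖ := (neg_le_abs _).trans (Complex.abs_re_le_norm _)
      _ = 1 / (4 * ‖t‖) := by rw [norm_div, norm_one, norm_mul, Complex.norm_ofNat]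
      _ ≤ 1 / (4 * r) := by gcongr
  have hpow : -ν * Real.log ‖t‖ ≤ |ν| * |Real.log ‖t‖| := by
    rw [← abs_neg ν, ← abs_mul]; exact le_abs_self _
  rw [besselAWeight, norm_mul, Complex.norm_exp, Complex.norm_exp, ← Real.exp_add, hlog, hexp]
  exact Real.exp_le_exp.mpr (by linarith)

lemma norm_le_norm_zero_add_mul_abs {E : Type*} [NormedAddCommGroup E] [NormedSpace ℝ E]
    {f : ℝ → E} (hf : Differentiable ℝ f) {M : ℝ} (hM : ∀ u, ‖deriv f u‖ ≤ M) (u : ℝ) :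
    ‖f u‖ ≤ ‖f 0‖ + M * |u| := by
  have hlip := convex_univ.norm_image_sub_le_of_norm_deriv_le (fun x _ => hf x)
    (fun x _ => hM x) (Set.mem_univ 0) (Set.mem_univ u)
  rw [sub_zero, Real.norm_eq_abs] at hlip
  linarith [norm_sub_norm_le (f u) (f 0)]

section Contour

variable {γ : ℝ → ℂ} {r c C : ℝ}

lemma exists_norm_besselAWeight_le_exp (ν : ℝ) {a : ℝ} (ha : 0 < a)
    (hγ : Differentiable ℝ γ) {M : ℝ} (hM : ∀ u, ‖deriv γ u‖ ≤ M)
    (hr : 0 < r) (hlow : ∀ u, r ≤ ‖γ u‖) (hc : 0 < c) (hre : ∀ u, (γ u).re ≤ -c * |u| + C) :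
    ∃ K β : ℝ, 0 < β ∧ ∀ u, ‖besselAWeight ν a (γ u)‖ ≤ Real.exp (K - β * |u|) := by
  have hM0 : 0 ≤ M := (norm_nonneg _).trans (hM 0)
  -- `ε` is chosen so that the growth `|ν| ε M |u|` of `|ν| |log ‖γ u‖|` costs only half the decay.
  set ε := a * c / (4 * (|ν| + 1) * (M + 1))
  have hε : 0 < ε := by positivity
  have hεM : |ν| * (ε * M) ≤ a * c / 4 := by
    have : (|ν| + 1) * (M + 1) * ε = a * c / 4 := by simp only [ε]; field_simp
    nlinarith [abs_nonneg ν, mul_nonneg hε.le (abs_nonneg ν), mul_nonneg hε.le hM0]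
  refine ⟨|ν| * (|Real.log r| + |Real.log ε| + ε * ‖γ 0‖) + a * C / 2 + 1 / (4 * r), a * c / 4,
    by positivity, fun u => (norm_besselAWeight_le ν a hr (hlow u)).trans ?_⟩
  have hlog : |Real.log ‖γ u‖| ≤ |Real.log r| + |Real.log ε| + ε * (‖γ 0‖ + M * |u|) :=
    (Real.abs_log_le_add_mul hr (hlow u) hε).trans
      (by gcongr; exact norm_le_norm_zero_add_mul_abs hγ hM u)
  have hνlog := mul_le_mul_of_nonneg_left hlog (abs_nonneg ν)
  have hrel := mul_le_mul_of_nonneg_left (hre u) (by positivity : 0 ≤ a / 2)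
  have hεMu := mul_le_mul_of_nonneg_right hεM (abs_nonneg u)
  exact Real.exp_le_exp.mpr (by linarith)

lemma exists_mul_one_add_abs_le_norm (hr : 0 < r) (hlow : ∀ v, r ≤ ‖γ v‖) (hc : 0 < c)
    (hre : ∀ v, (γ v).re ≤ -c * |v| + C) :
    ∃ m : ℝ, 0 < m ∧ ∀ v, m * (1 + |v|) ≤ ‖γ v‖ := by
  set κ := c * r / (r + |C|)
  have hκ : 0 < κ := by positivity
  -- `c|v| ≤ ‖γ v‖ + C` from the real part, and `C ≤ (|C| / r) ‖γ v‖` since `‖γ v‖ ≥ r`.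
  have hlin : ∀ v, κ * |v| ≤ ‖γ v‖ := fun v => by
    have hRe : -‖γ v‖ ≤ (γ v).re := neg_le_of_abs_le (Complex.abs_re_le_norm _)
    have hCr : r * C ≤ ‖γ v‖ * |C| :=
      (mul_le_mul_of_nonneg_left (le_abs_self C) hr.le).trans
        (mul_le_mul_of_nonneg_right (hlow v) (abs_nonneg C))
    rw [div_mul_eq_mul_div, div_le_iff₀ (by positivity)]
    nlinarith [hre v, abs_nonneg v]
  refine ⟨min r κ / 2, by positivity, fun v => ?_⟩
  nlinarith [hlow v, hlin v, min_le_left r κ, min_le_right r κ, abs_nonneg v]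

end Contour

lemma div_sq_le_mul_inv_one_add_sq {x y m M v : ℝ} (hm : 0 < m) (hx : m * (1 + |v|) ≤ x)
    (hy0 : 0 ≤ y) (hy : y ≤ M) : y / x ^ 2 ≤ M / m ^ 2 * (1 + v ^ 2)⁻¹ := by
  have hsq : m ^ 2 * (1 + v ^ 2) ≤ x ^ 2 :=
    calc m ^ 2 * (1 + v ^ 2) ≤ (m * (1 + |v|)) ^ 2 := by
          nlinarith [sq_abs v, abs_nonneg v, sq_nonneg m]
      _ ≤ x ^ 2 := by gcongr
  calc y / x ^ 2 ≤ M / (m ^ 2 * (1 + v ^ 2)) := by gcongr; linarith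
    _ = M / m ^ 2 * (1 + v ^ 2)⁻¹ := by rw [div_mul_eq_div_div, div_eq_mul_inv]

lemma integrable_exp_sub_mul_abs (K : ℝ) {β : ℝ} (hβ : 0 < β) :
    Integrable (fun u : ℝ => Real.exp (K - β * |u|)) := by
  have hIoi : IntegrableOn (fun u : ℝ => Real.exp (-β * |u|)) (Set.Ioi 0) :=
    (exp_neg_integrableOn_Ioi 0 hβ).congr_fun (fun u hu => by rw [abs_of_pos hu]) measurableSet_Ioi
  have hIic : IntegrableOn (fun u : ℝ => Real.exp (-β * |u|)) (Set.Iic 0) := by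
    have hneg : MeasurableEmbedding fun u : ℝ => -u := (Homeomorph.neg ℝ).measurableEmbedding
    rw [← Measure.map_neg_eq_self (volume : Measure ℝ), hneg.integrableOn_map_iff]
    simp_rw [Function.comp_def, abs_neg, Set.neg_preimage, Set.neg_Iic, neg_zero]
    exact (integrableOn_Ici_iff_integrableOn_Ioi).mpr hIoi
  have h := hIic.union hIoi
  rw [Set.Iic_union_Ioi, integrableOn_univ] at h
  simpa only [← Real.exp_add, ← sub_eq_add_neg, neg_mul] using h.const_mul (Real.exp K)

theorem besselA_kernel_square_integrable_general
    (ν a₁ : ℝ) (ha₁ : 0 < a₁)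
    (γ : ℝ → ℂ) (hγ : ContDiff ℝ 1 γ)
    (M : ℝ) (hM : ∀ u : ℝ, ‖deriv γ u‖ ≤ M)
    (r : ℝ) (hr : 0 < r) (hlow : ∀ u : ℝ, r ≤ ‖γ u‖)
    (c C : ℝ) (hc : 0 < c) (hre : ∀ u : ℝ, (γ u).re ≤ -c * |u| + C)
    (d : ℝ) (hd : 0 < d) (hsep : ∀ u v : ℝ, d ≤ ‖γ u - (γ v)⁻¹‖) :
    Integrable (fun p : ℝ × ℝ =>
      ‖Complex.exp (-(ν : ℂ) * Complex.log (γ p.1)) *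
          Complex.exp ((a₁ : ℂ) * γ p.1 / 2 - 1 / (4 * γ p.1)) /
          (γ p.1 - (γ p.2)⁻¹)‖ ^ 2
        * ‖deriv γ p.1‖ * (‖deriv γ p.2‖ / ‖γ p.2‖ ^ 2))
      (volume : Measure (ℝ × ℝ)) := by
  obtain ⟨K, β, hβ, hweight⟩ := exists_norm_besselAWeight_le_exp ν ha₁
    (hγ.differentiable one_ne_zero) hM hr hlow hc hre
  obtain ⟨m, hm, hgrowth⟩ := exists_mul_one_add_abs_le_norm hr hlow hc hre
  have hM0 : 0 ≤ M := (norm_nonneg _).trans (hM 0)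
  have hdom : Integrable (fun p : ℝ × ℝ =>
      (M / d ^ 2 * Real.exp (2 * K - 2 * β * |p.1|)) * (M / m ^ 2 * (1 + p.2 ^ 2)⁻¹)) :=
    ((integrable_exp_sub_mul_abs _ (by positivity)).const_mul _).mul_prod
      (integrable_inv_one_add_sq.const_mul _)
  have hmeas : Measurable (fun p : ℝ × ℝ =>
      ‖besselAWeight ν a₁ (γ p.1) / (γ p.1 - (γ p.2)⁻¹)‖ ^ 2
        * ‖deriv γ p.1‖ * (‖deriv γ p.2‖ / ‖γ p.2‖ ^ 2)) := by
    have := hγ.continuous.measurable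
    have := (hγ.continuous_deriv le_rfl).measurable
    unfold besselAWeight
    fun_prop
  refine hdom.mono' hmeas.aestronglyMeasurable (ae_of_all _ fun ⟨u, v⟩ => ?_)
  rw [Real.norm_of_nonneg (by positivity)]
  calc ‖besselAWeight ν a₁ (γ u) / (γ u - (γ v)⁻¹)‖ ^ 2 * ‖deriv γ u‖
        * (‖deriv γ v‖ / ‖γ v‖ ^ 2)
      ≤ (Real.exp (K - β * |u|) / d) ^ 2 * M * (M / m ^ 2 * (1 + v ^ 2)⁻¹) := by
        rw [norm_div]
        gcongr
        exacts [hweight u, hsep u v, hM u,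
          div_sq_le_mul_inv_one_add_sq hm (hgrowth v) (norm_nonneg _) (hM v)]
    _ = M / d ^ 2 * Real.exp (2 * K - 2 * β * |u|) * (M / m ^ 2 * (1 + v ^ 2)⁻¹) := by
        rw [div_pow, ← Real.exp_nat_mul]
        ring_nf

/-- square-integrability (Hilbert–Schmidt property) of the kernel
`𝒜(t,s) = (2πi)⁻¹ t^{−ν} e^{a₁t/2 − 1/(4t)}(t−s)⁻¹` along the parametrized
contours `t = γ(u)`, `s = 1/γ(v)`. -/
theorem besselA_kernel_square_integrable
    (ν a₁ : ℝ) (hν : -1 < ν) (ha₁ : 0 < a₁)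
    (γ : ℝ → ℂ) (hγ : ContDiff ℝ 1 γ)
    (M : ℝ) (hM : ∀ u : ℝ, ‖deriv γ u‖ ≤ M)
    (hcut : ∀ u : ℝ, γ u ∉ Complex.ofReal '' Set.Iic (0 : ℝ))
    (r : ℝ) (hr : 0 < r) (hlow : ∀ u : ℝ, r ≤ ‖γ u‖)
    (c C : ℝ) (hc : 0 < c) (hre : ∀ u : ℝ, (γ u).re ≤ -c * |u| + C)
    (d : ℝ) (hd : 0 < d) (hsep : ∀ u v : ℝ, d ≤ ‖γ u - (γ v)⁻¹‖) :
    Integrable (fun p : ℝ × ℝ =>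
      ‖Complex.exp (-(ν : ℂ) * Complex.log (γ p.1)) *
          Complex.exp ((a₁ : ℂ) * γ p.1 / 2 - 1 / (4 * γ p.1)) /
          (γ p.1 - (γ p.2)⁻¹)‖ ^ 2
        * ‖deriv γ p.1‖ * (‖deriv γ p.2‖ / ‖γ p.2‖ ^ 2))
      (volume : Measure (ℝ × ℝ)) :=
  besselA_kernel_square_integrable_general ν a₁ ha₁ γ hγ M hM r hr hlow c C hc hre d hd hsep
end
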